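/- Let n ≥ 1, X₁, X₂ : Fin n → E, and ψ : ℝ → ℝ → ℝ. Then the dual coordinate update is equivariant under independent rigid motions of the two complexes: for all rigid motions g₁, g₂ : E ≃ᵃⁱ[ℝ] E and every u, F₁(g₁ ∘ X₁, g₂ ∘ X₂) u = g₁ (F₁(X₁, X₂) u) and F₂(g₁ ∘ X₁, g₂ ∘ X₂) u = g₂ (F₂(X₁, X₂) u). (Each pairwise distance d_k is computed within the k-th pose alone and is therefore preserved when an isometry is applied to that pose, so the scalar coefficients are invariant under independent rigid motions and the displacement vectors transform by the linear part of the corresponding motion.) -/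

import Mathlib

/-!
The coefficients of the update depend on the poses only through intra-pose distances, which
isometries preserve, and a point of the form `x + ∑ cᵢ • (x - yᵢ)` is carried by any affine map
to the point of the same form built from the images. Since swapping the two poses exchanges
`F₁` and `F₂`, it suffices to treat `F₁`.
-/

noncomputable section

open Finset

/-- 3-dimensional Euclidean space. -/
abbrev E : Type := EuclideanSpace ℝ (Fin 3)

/-- Symmetric sum feature `s u w = d₁ u w + d₂ u w`. -/
def sFeat {n : ℕ} (X₁ X₂ : Fin n → E) (u w : Fin n) : ℝ :=
  dist (X₁ u) (X₁ w) + dist (X₂ u) (X₂ w)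

/-- Symmetric difference feature `δ u w = |d₁ u w − d₂ u w|`. -/
def δFeat {n : ℕ} (X₁ X₂ : Fin n → E) (u w : Fin n) : ℝ :=
  |dist (X₁ u) (X₁ w) - dist (X₂ u) (X₂ w)|

/-- The dual coordinate update for the first pose (division by zero is zero). -/
def F₁ {n : ℕ} (ψ : ℝ → ℝ → ℝ) (X₁ X₂ : Fin n → E) (u : Fin n) : E :=
  X₁ u + ∑ w ∈ Finset.univ.erase u,
    (ψ (sFeat X₁ X₂ u w) (δFeat X₁ X₂ u w) / (dist (X₁ u) (X₁ w)) ^ 2) • (X₁ u - X₁ w)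

/-- The dual coordinate update for the second pose (division by zero is zero). -/
def F₂ {n : ℕ} (ψ : ℝ → ℝ → ℝ) (X₁ X₂ : Fin n → E) (u : Fin n) : E :=
  X₂ u + ∑ w ∈ Finset.univ.erase u,
    (ψ (sFeat X₁ X₂ u w) (δFeat X₁ X₂ u w) / (dist (X₂ u) (X₂ w)) ^ 2) • (X₂ u - X₂ w)


theorem AffineMap.map_add_sum_smul_sub {k V V' ι : Type*} [Ring k] [AddCommGroup V]
    [Module k V] [AddCommGroup V'] [Module k V'] (f : V →ᵃ[k] V') (s : Finset ι) (c : ι → k)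
    (x : V) (y : ι → V) :
    f (x + ∑ i ∈ s, c i • (x - y i)) = f x + ∑ i ∈ s, c i • (f x - f (y i)) := by
  have hsub (a b : V) : f a - f b = f.linear (a - b) := (f.linearMap_vsub a b).symm
  rw [add_comm x, ← vadd_eq_add, f.map_vadd, vadd_eq_add, add_comm, map_sum]
  simp only [hsub, map_smul]

section Isometry

variable {n : ℕ} {g₁ g₂ : E → E}

theorem sFeat_comp_isometry (h₁ : Isometry g₁) (h₂ : Isometry g₂) (X₁ X₂ : Fin n → E) :
    sFeat (g₁ ∘ X₁) (g₂ ∘ X₂) = sFeat X₁ X₂ := by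
  funext u w
  simp only [sFeat, Function.comp_apply, h₁.dist_eq, h₂.dist_eq]

theorem δFeat_comp_isometry (h₁ : Isometry g₁) (h₂ : Isometry g₂) (X₁ X₂ : Fin n → E) :
    δFeat (g₁ ∘ X₁) (g₂ ∘ X₂) = δFeat X₁ X₂ := by
  funext u w
  simp only [δFeat, Function.comp_apply, h₁.dist_eq, h₂.dist_eq]

theorem F₁_comp_isometry (ψ : ℝ → ℝ → ℝ) (g₁ : E →ᵃⁱ[ℝ] E) (h₂ : Isometry g₂)
    (X₁ X₂ : Fin n → E) (u : Fin n) :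
    F₁ ψ (g₁ ∘ X₁) (g₂ ∘ X₂) u = g₁ (F₁ ψ X₁ X₂ u) := by
  simp only [F₁, sFeat_comp_isometry g₁.isometry h₂, δFeat_comp_isometry g₁.isometry h₂,
    Function.comp_apply, g₁.dist_map]
  exact (g₁.toAffineMap.map_add_sum_smul_sub _ _ _ _).symm

end Isometry

theorem F₂_eq_F₁_swap {n : ℕ} (ψ : ℝ → ℝ → ℝ) (X₁ X₂ : Fin n → E) :
    F₂ ψ X₁ X₂ = F₁ ψ X₂ X₁ := by
  funext u
  simp only [F₁, F₂, sFeat, δFeat, add_comm (dist (X₁ _) _), abs_sub_comm (dist (X₁ _) _)]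

theorem dualCoordUpdate_se3_equivariant_general {n : ℕ}
    (X₁ X₂ : Fin n → E) (ψ : ℝ → ℝ → ℝ) (g₁ g₂ : E ≃ᵃⁱ[ℝ] E) (u : Fin n) :
    F₁ ψ (g₁ ∘ X₁) (g₂ ∘ X₂) u = g₁ (F₁ ψ X₁ X₂ u) ∧
    F₂ ψ (g₁ ∘ X₁) (g₂ ∘ X₂) u = g₂ (F₂ ψ X₁ X₂ u) := by
  refine ⟨F₁_comp_isometry ψ g₁.toAffineIsometry g₂.isometry X₁ X₂ u, ?_⟩
  rw [F₂_eq_F₁_swap, F₂_eq_F₁_swap]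
  exact F₁_comp_isometry ψ g₂.toAffineIsometry g₁.isometry X₂ X₁ u

/-- Equivariance of the dual coordinate update under independent rigid motions of the two
complexes: for all rigid motions `g₁, g₂` and every `u`,
`F₁(g₁ ∘ X₁, g₂ ∘ X₂) u = g₁ (F₁(X₁, X₂) u)` and `F₂(g₁ ∘ X₁, g₂ ∘ X₂) u = g₂ (F₂(X₁, X₂) u)`. -/
theorem dualCoordUpdate_se3_equivariant {n : ℕ} (hn : 1 ≤ n)
    (X₁ X₂ : Fin n → E) (ψ : ℝ → ℝ → ℝ) (g₁ g₂ : E ≃ᵃⁱ[ℝ] E) (u : Fin n) :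
    F₁ ψ (g₁ ∘ X₁) (g₂ ∘ X₂) u = g₁ (F₁ ψ X₁ X₂ u) ∧
    F₂ ψ (g₁ ∘ X₁) (g₂ ∘ X₂) u = g₂ (F₂ ψ X₁ X₂ u) :=
  dualCoordUpdate_se3_equivariant_general X₁ X₂ ψ g₁ g₂ u
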